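/- If γ ∈ NC(n) has blocks B_1,...,B_s of cardinalities k_1,...,k_s, then there is an order isomorphism between the fiber [γ] = {π ∈ NCL(n) : c(π) = γ} and the product [1_{k_1}] × ⋯ × [1_{k_s}], where [1_k] = {π ∈ NCL(k) : c(π) = 1_k} is the set of connected non-crossing linked partitions of {1,...,k}. -/

import Mathlib

open scoped Classical


/-- Two blocks `B`, `C` cross: there are `i < k < p < q` with `i, p ∈ B` and `k, q ∈ C`. -/
def Crosses {n : ℕ} (B C : Finset (Fin n)) : Prop :=
  ∃ i k p q : Fin n, i < k ∧ k < p ∧ p < q ∧ i ∈ B ∧ p ∈ B ∧ k ∈ C ∧ q ∈ C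

/-- `π` is a non-crossing linked partition of `{1, …, n}` (encoded as `Fin n`):
its (nonempty) blocks cover `Fin n`, are pairwise non-crossing, any two distinct blocks
intersect in at most one element, and if two distinct blocks intersect in `{j}` then both
blocks have at least two elements and `j` is the minimal element of exactly one of them. -/
def IsNCL (n : ℕ) (π : Finset (Finset (Fin n))) : Prop :=
  (∀ B ∈ π, B.Nonempty) ∧
  (∀ x : Fin n, ∃ B ∈ π, x ∈ B) ∧
  (∀ B ∈ π, ∀ C ∈ π, B ≠ C → ¬ Crosses B C) ∧
  (∀ B ∈ π, ∀ C ∈ π, B ≠ C → (B ∩ C).card ≤ 1 ∧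
    ∀ j : Fin n, B ∩ C = {j} →
      2 ≤ B.card ∧ 2 ≤ C.card ∧
        Xor' (B.min = (j : WithBot (Fin n))) (C.min = (j : WithBot (Fin n))))

/-- `π` is a non-crossing partition: a non-crossing linked partition with pairwise
disjoint blocks. -/
def IsNC (n : ℕ) (π : Finset (Finset (Fin n))) : Prop :=
  IsNCL n π ∧ ∀ B ∈ π, ∀ C ∈ π, B ≠ C → Disjoint B C

/-- `Refines n σ π` (i.e. `σ ⪯ π`): every block of `π` is a union of blocks of `σ`. -/
def Refines (n : ℕ) (σ π : Finset (Finset (Fin n))) : Prop :=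
  ∀ B ∈ π, ∃ S : Finset (Finset (Fin n)), S ⊆ σ ∧ B = S.sup id

/-- `a` and `b` lie in a common block of `π`. -/
def Linked {n : ℕ} (π : Finset (Finset (Fin n))) (a b : Fin n) : Prop :=
  ∃ B ∈ π, a ∈ B ∧ b ∈ B

/-- `a` and `b` are connected in `π`: joined by a chain of pairwise intersecting blocks. -/
def Connected {n : ℕ} (π : Finset (Finset (Fin n))) (a b : Fin n) : Prop :=
  Relation.ReflTransGen (Linked π) a b

/-- The partition `c(π)` of `Fin n` into the connected components of `π`. -/
noncomputable def cPart (n : ℕ) (π : Finset (Finset (Fin n))) : Finset (Finset (Fin n)) :=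
  Finset.univ.image fun i => Finset.univ.filter (Connected π i)

/-- Embedding of the unbarred copy: `i ↦ 2 i` in the interleaved order
`1, 1̄, 2, 2̄, …, n, n̄`. -/
def ueEmb (n : ℕ) (i : Fin n) : Fin (2 * n) := ⟨2 * i.1, by have := i.isLt; omega⟩

/-- Embedding of the barred copy: `i ↦ 2 i + 1` in the interleaved order. -/
def beEmb (n : ℕ) (i : Fin n) : Fin (2 * n) := ⟨2 * i.1 + 1, by have := i.isLt; omega⟩

/-- The union `γ ∪ γ'` inside the interleaved ordered set `1, 1̄, 2, 2̄, …, n, n̄`. -/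
def interleave (n : ℕ) (γ γ' : Finset (Finset (Fin n))) : Finset (Finset (Fin (2 * n))) :=
  γ.image (Finset.image (ueEmb n)) ∪ γ'.image (Finset.image (beEmb n))

/-- `γ'` is the Kreweras complement of `γ`: the largest non-crossing partition (in the
refinement order) such that `γ ∪ γ'` is non-crossing in the interleaved order. -/
def IsKr (n : ℕ) (γ γ' : Finset (Finset (Fin n))) : Prop :=
  IsNC n γ' ∧ IsNC (2 * n) (interleave n γ γ') ∧
  ∀ τ, IsNC n τ → IsNC (2 * n) (interleave n γ τ) → Refines n τ γ'

/-- `B` is an exterior block of `γ`: no other block `D` of `γ` contains elements `l, s`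
with `l = min B`, or `l < min B` and `max B < s`. -/
def IsExteriorIn (n : ℕ) (γ : Finset (Finset (Fin n))) (B : Finset (Fin n)) : Prop :=
  B ∈ γ ∧ ∀ D ∈ γ, D ≠ B → ∀ l ∈ D, ∀ s ∈ D,
    ¬((l ∈ B ∧ ∀ b ∈ B, l ≤ b) ∨ (∀ b ∈ B, l < b ∧ b < s))

/-- Halving map `Fin (2n) → Fin n`. -/
def halfEmb (n : ℕ) (i : Fin (2 * n)) : Fin n := ⟨i.1 / 2, by have := i.isLt; omega⟩

/-- `γ₋`: the restriction of `γ ∈ NC(2n)` to the odd elements `{1, 3, …, 2n − 1}`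
(indices `≡ 0 mod 2` in the `0`-based encoding), identified with a partition of `Fin n`. -/
noncomputable def minusPart (n : ℕ) (γ : Finset (Finset (Fin (2 * n)))) :
    Finset (Finset (Fin n)) :=
  (γ.filter fun B => ∀ i ∈ B, i.1 % 2 = 0).image (Finset.image (halfEmb n))

/-- `γ₊`: the restriction of `γ ∈ NC(2n)` to the even elements `{2, 4, …, 2n}`,
identified with a partition of `Fin n`. -/
noncomputable def plusPart (n : ℕ) (γ : Finset (Finset (Fin (2 * n)))) :
    Finset (Finset (Fin n)) :=
  (γ.filter fun B => ∀ i ∈ B, i.1 % 2 = 1).image (Finset.image (halfEmb n))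

/-- `γ ∈ NC_s(2n)`: a non-crossing partition of `{1, …, 2n}` all of whose blocks have
elements of constant parity, with `γ₊ = Kr(γ₋)`. -/
def NCs (n : ℕ) (γ : Finset (Finset (Fin (2 * n)))) : Prop :=
  IsNC (2 * n) γ ∧
  (∀ B ∈ γ, (∀ i ∈ B, i.1 % 2 = 0) ∨ (∀ i ∈ B, i.1 % 2 = 1)) ∧
  IsKr n (minusPart n γ) (plusPart n γ)

/-- The restriction of `γ` to a subset `S`. -/
noncomputable def restrictTo (n : ℕ) (γ : Finset (Finset (Fin n))) (S : Finset (Fin n)) :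
    Finset (Finset (Fin n)) :=
  (γ.image fun B => B ∩ S).filter Finset.Nonempty

/-- A planar rooted tree: a root together with a linearly ordered (left to right) list of
subtrees. -/
inductive PTree where
  | node : List PTree → PTree

mutual
/-- Number of vertices of a planar rooted tree. -/
def PTree.size : PTree → ℕ
  | .node ts => 1 + sizeList ts
def sizeList : List PTree → ℕ
  | [] => 0
  | t :: ts => PTree.size t + sizeList ts
end

/-- Depth-first indices of the roots of a list of trees, the first root getting index `k`. -/
def childRoots : List PTree → ℕ → List ℕ
  | [], _ => []
  | t :: ts, k => k :: childRoots ts (k + PTree.size t)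

mutual
/-- The blocks of the constituent elementary trees (a root together with its offsprings,
provided there is at least one offspring) of a planar tree, with vertices numbered in
depth-first (left-first) order starting at `k`. -/
def PTree.blk : PTree → ℕ → List (List ℕ)
  | .node ts, k =>
      (if ts.isEmpty then [] else [k :: childRoots ts (k + 1)]) ++ blkList ts (k + 1)
def blkList : List PTree → ℕ → List (List ℕ)
  | [], _ => []
  | t :: ts, k => PTree.blk t k ++ blkList ts (k + PTree.size t)
end

/-- The blocks of the elementary trees constituting a planar tree, in depth-first
numbering starting at `0`; a single vertex is itself an elementary tree. -/
def treeBlocks : PTree → List (List ℕ)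
  | .node [] => [[0]]
  | t => t.blk 0

/-- Convert a list of (`0`-based) vertex numbers into a block of `Fin n`. -/
def listToBlock (n : ℕ) (l : List ℕ) : Finset (Fin n) :=
  (l.filterMap fun i => if h : i < n then some (⟨i, h⟩ : Fin n) else none).toFinset

mutual
/-- Evaluation of a planar rooted tree: the product over its vertices of `f k`, where `k`
is the number of offsprings of the vertex (so an elementary tree with `m` vertices
contributes `f (m − 1)`). -/
def PTree.eval (f : ℕ → ℂ) : PTree → ℂ
  | .node ts => f ts.length * evalList f ts
def evalList (f : ℕ → ℂ) : List PTree → ℂ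
  | [] => 1
  | t :: ts => PTree.eval f t * evalList f ts
end

/-- A bicolor planar rooted tree: each subtree carries a color (`true` = color 1,
`false` = color 0). -/
inductive BTree where
  | node : List (Bool × BTree) → BTree

mutual
/-- Number of vertices of a bicolor planar tree. -/
def BTree.size : BTree → ℕ
  | .node ts => 1 + bsizeList ts
def bsizeList : List (Bool × BTree) → ℕ
  | [] => 0
  | (_, t) :: ts => BTree.size t + bsizeList ts
end

mutual
/-- Validity of a bicolor planar tree: at every vertex, the offsprings of color 1 precede
the offsprings of color 0. -/
def BTree.Valid : BTree → Prop
  | .node ts => List.Chain' (fun a b => b ≤ a) (ts.map Prod.fst) ∧ bvalidList ts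
def bvalidList : List (Bool × BTree) → Prop
  | [] => True
  | (_, t) :: ts => BTree.Valid t ∧ bvalidList ts
end

/-- A bicolor tree is elementary when all offsprings of the root are leaves. -/
def BTree.IsElementary : BTree → Prop
  | .node ts => ∀ p ∈ ts, p.2 = BTree.node []
/-- The term `t_π[X_1, …, X_n]`: the product over blocks `B = (i_1 < … < i_l)` of `π` of
`t_{l−1}(X_{i_1}, …, X_{i_l})`, times the product over `k ∈ s(π)` (the elements that are
not the minimal element of any block) of `t_0(X_k)`. Here `t m` stands for `t_{m−1}`,
taking `m` arguments. -/
noncomputable def tTerm {A : Type*} [Ring A] (t : ∀ m : ℕ, (Fin m → A) → ℂ)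
    (n : ℕ) (π : Finset (Finset (Fin n))) (X : Fin n → A) : ℂ :=
  (∏ B ∈ π, t B.card fun j => X (B.orderIsoOfFin rfl j).1) *
  ∏ k ∈ Finset.univ.filter
      (fun k : Fin n => ∀ B ∈ π, B.min ≠ (k : WithBot (Fin n))),
    t 1 fun _ => X k

/-- The family `t` satisfies the defining recurrence of the `t`-coefficients:
`φ(X_1 ⋯ X_n) = Σ_{π ∈ NCL(n)} t_π[X_1, …, X_n]`. -/
def TRec {A : Type*} [Ring A] [Algebra ℂ A] (φ : A →ₗ[ℂ] ℂ)
    (t : ∀ m : ℕ, (Fin m → A) → ℂ) : Prop :=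
  ∀ (n : ℕ) (X : Fin (n + 1) → A),
    φ (List.ofFn X).prod =
      ∑ π ∈ Finset.univ.filter (fun π => IsNCL (n + 1) π), tTerm t (n + 1) π X

/-- The term `κ_γ[X_1, …, X_n]`: the product over blocks `B = (i_1 < … < i_l)` of `γ` of
`κ_l(X_{i_1}, …, X_{i_l})`. -/
noncomputable def cumTerm {A : Type*} [Ring A] (κ : ∀ m : ℕ, (Fin m → A) → ℂ)
    (n : ℕ) (γ : Finset (Finset (Fin n))) (X : Fin n → A) : ℂ :=
  ∏ B ∈ γ, κ B.card fun j => X (B.orderIsoOfFin rfl j).1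

/-- The family `κ` satisfies the moment–cumulant recurrence
`φ(X_1 ⋯ X_n) = Σ_{γ ∈ NC(n)} κ_γ[X_1, …, X_n]` defining the free cumulants. -/
def CumRec {A : Type*} [Ring A] [Algebra ℂ A] (φ : A →ₗ[ℂ] ℂ)
    (κ : ∀ m : ℕ, (Fin m → A) → ℂ) : Prop :=
  ∀ (n : ℕ) (X : Fin (n + 1) → A),
    φ (List.ofFn X).prod =
      ∑ γ ∈ Finset.univ.filter (fun γ => IsNC (n + 1) γ), cumTerm κ (n + 1) γ X

/-- Free independence of a family of unital subalgebras: alternating products of centered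
elements have vanishing expectation. -/
def FreeFamily {A : Type*} [Ring A] [Algebra ℂ A] (φ : A →ₗ[ℂ] ℂ) {I : Type*}
    (S : I → Subalgebra ℂ A) : Prop :=
  ∀ (n : ℕ) (a : Fin (n + 1) → A) (idx : Fin (n + 1) → I),
    (∀ k, a k ∈ S (idx k)) → (∀ k, φ (a k) = 0) →
    (∀ k : Fin n, idx k.castSucc ≠ idx k.succ) →
    φ (List.ofFn a).prod = 0

/-- Two elements are free if the unital subalgebras they generate are free. -/
def FreePair {A : Type*} [Ring A] [Algebra ℂ A] (φ : A →ₗ[ℂ] ℂ) (X Y : A) : Prop :=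
  FreeFamily φ fun b : Bool =>
    if b = true then Algebra.adjoin ℂ {X} else Algebra.adjoin ℂ {Y}

/-! Every block of a linked partition `π` lies in one connected component of `π`, so `π` is the
disjoint union of its restrictions to the blocks of `c(π)`. Transporting a block `B` to
`{1, …, |B|}` along its increasing enumeration preserves crossings, intersections, cardinalities
and minima, so the restriction of `π` to `B` is a connected non-crossing linked partition.
Conversely, gluing connected non-crossing linked partitions of the blocks of a non-crossing `γ`
gives a non-crossing linked partition whose components are the blocks of `γ`, because these
blocks are disjoint and do not cross. Refinement is a pointwise condition, so it can be checked
block by block. -/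

open Finset

theorem Finset.min_eq_coe_iff {α : Type*} [LinearOrder α] {s : Finset α} {a : α} :
    s.min = (a : WithTop α) ↔ a ∈ s ∧ ∀ b ∈ s, a ≤ b :=
  ⟨fun h => ⟨mem_of_min h, fun _ hb => min_le_of_eq hb h⟩, fun ⟨ha, hle⟩ =>
    le_antisymm (min_le ha) (Finset.le_min fun b hb => WithTop.coe_le_coe.2 (hle b hb))⟩

theorem Finset.min_map_eq_coe_iff {α β : Type*} [LinearOrder α] [LinearOrder β] (f : α ↪o β)
    {s : Finset α} {a : α} :
    (s.map f.toEmbedding).min = (f a : WithTop β) ↔ s.min = (a : WithTop α) := by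
  simp [min_eq_coe_iff]

theorem Crosses.mono {n : ℕ} {B C B' C' : Finset (Fin n)} (h : Crosses B C) (hB : B ⊆ B')
    (hC : C ⊆ C') : Crosses B' C' :=
  let ⟨i, k, p, q, hik, hkp, hpq, hi, hp, hk, hq⟩ := h
  ⟨i, k, p, q, hik, hkp, hpq, hB hi, hB hp, hC hk, hC hq⟩

theorem crosses_map_iff {m n : ℕ} (f : Fin m ↪o Fin n) {B C : Finset (Fin m)} :
    Crosses (B.map f.toEmbedding) (C.map f.toEmbedding) ↔ Crosses B C := by
  constructor
  · rintro ⟨_, _, _, _, hik, hkp, hpq, hfi, hfp, hfk, hfq⟩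
    obtain ⟨i, hi, rfl⟩ := mem_map.1 hfi
    obtain ⟨p, hp, rfl⟩ := mem_map.1 hfp
    obtain ⟨k, hk, rfl⟩ := mem_map.1 hfk
    obtain ⟨q, hq, rfl⟩ := mem_map.1 hfq
    exact ⟨i, k, p, q, f.lt_iff_lt.1 hik, f.lt_iff_lt.1 hkp, f.lt_iff_lt.1 hpq, hi, hp, hk, hq⟩
  · rintro ⟨i, k, p, q, hik, hkp, hpq, hi, hp, hk, hq⟩
    exact ⟨f i, f k, f p, f q, f.lt_iff_lt.2 hik, f.lt_iff_lt.2 hkp, f.lt_iff_lt.2 hpq,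
      mem_map_of_mem _ hi, mem_map_of_mem _ hp, mem_map_of_mem _ hk, mem_map_of_mem _ hq⟩

/-- The last clause of `IsNCL`, which coerces into `WithBot` instead: both coercions are
`Option.some`, so the two statements agree definitionally. -/
def LinkCompatible {n : ℕ} (B C : Finset (Fin n)) : Prop :=
  (B ∩ C).card ≤ 1 ∧ ∀ j : Fin n, B ∩ C = {j} →
    2 ≤ B.card ∧ 2 ≤ C.card ∧ Xor (B.min = (j : WithTop (Fin n))) (C.min = (j : WithTop (Fin n)))

theorem linkCompatible_map_iff {m n : ℕ} (f : Fin m ↪o Fin n) {B C : Finset (Fin m)} :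
    LinkCompatible (B.map f.toEmbedding) (C.map f.toEmbedding) ↔ LinkCompatible B C := by
  unfold LinkCompatible
  rw [← map_inter, card_map, card_map, card_map]
  refine and_congr_right fun _ => ⟨fun h j hj => ?_, fun h x hx => ?_⟩
  · simpa only [RelEmbedding.coe_toEmbedding, min_map_eq_coe_iff] using
      h (f j) (by rw [hj, map_singleton]; rfl)
  · obtain ⟨j, -, rfl⟩ := mem_map.1 (hx ▸ mem_singleton_self x)
    simpa only [RelEmbedding.coe_toEmbedding, min_map_eq_coe_iff] using
      h j (map_injective f.toEmbedding (by rw [hx, map_singleton]))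

theorem linkCompatible_of_disjoint {n : ℕ} {B C : Finset (Fin n)} (h : Disjoint B C) :
    LinkCompatible B C := by
  rw [LinkCompatible, disjoint_iff_inter_eq_empty.1 h]
  exact ⟨by simp, fun j hj => absurd hj.symm (singleton_ne_empty j)⟩

section Components

variable {n : ℕ} {π : Finset (Finset (Fin n))}

theorem Connected.symm {a b : Fin n} (h : Connected π a b) : Connected π b a :=
  Relation.ReflTransGen.mono (fun _ _ ⟨B, hB, hb, ha⟩ => ⟨B, hB, ha, hb⟩) _ _
    (Relation.ReflTransGen.swap _ _ h)

theorem Connected.mem_of_forall_subset {B : Finset (Fin n)}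
    (hB : ∀ P ∈ π, ∀ x ∈ P, x ∈ B → P ⊆ B) {x y : Fin n} (h : Connected π x y) (hx : x ∈ B) :
    y ∈ B := by
  induction h with
  | refl => exact hx
  | tail _ hlink ih =>
    obtain ⟨P, hP, hbP, hcP⟩ := hlink
    exact hB P hP _ hbP ih hcP

noncomputable def component (π : Finset (Finset (Fin n))) (x : Fin n) : Finset (Fin n) :=
  univ.filter (Connected π x)

theorem mem_component {x y : Fin n} : y ∈ component π x ↔ Connected π x y := by
  simp [component]

theorem mem_cPart {B : Finset (Fin n)} : B ∈ cPart n π ↔ ∃ x, component π x = B := by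
  simp [cPart, component]

theorem component_mem_cPart (x : Fin n) : component π x ∈ cPart n π :=
  mem_cPart.2 ⟨x, rfl⟩

theorem component_eq_of_connected {x y : Fin n} (h : Connected π x y) :
    component π x = component π y := by
  ext z
  simp only [mem_component]
  exact ⟨h.symm.trans, h.trans⟩

theorem component_eq_of_mem {B : Finset (Fin n)} (hB : B ∈ cPart n π) {x : Fin n}
    (hx : x ∈ B) : component π x = B := by
  obtain ⟨y, rfl⟩ := mem_cPart.1 hB
  exact (component_eq_of_connected (mem_component.1 hx)).symm

theorem nonempty_of_mem_cPart {B : Finset (Fin n)} (hB : B ∈ cPart n π) : B.Nonempty := by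
  obtain ⟨x, rfl⟩ := mem_cPart.1 hB
  exact ⟨x, mem_component.2 .refl⟩

theorem subset_component {P : Finset (Fin n)} (hP : P ∈ π) {x : Fin n} (hx : x ∈ P) :
    P ⊆ component π x :=
  fun _ hy => mem_component.2 (.single ⟨P, hP, hx, hy⟩)

theorem subset_of_mem_cPart {B P : Finset (Fin n)} (hB : B ∈ cPart n π) (hP : P ∈ π)
    {x : Fin n} (hxP : x ∈ P) (hxB : x ∈ B) : P ⊆ B :=
  component_eq_of_mem hB hxB ▸ subset_component hP hxP

theorem exists_mem_cPart_superset {P : Finset (Fin n)} (hP : P ∈ π) (hne : P.Nonempty) :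
    ∃ B ∈ cPart n π, P ⊆ B :=
  let ⟨x, hx⟩ := hne
  ⟨component π x, component_mem_cPart x, subset_component hP hx⟩

theorem cPart_eq_singleton_univ_iff (hn : 0 < n) :
    cPart n π = {univ} ↔ ∀ i j : Fin n, Connected π i j := by
  constructor
  · intro h i j
    have : component π i = univ := mem_singleton.1 (h ▸ component_mem_cPart i)
    exact mem_component.1 (this ▸ mem_univ j)
  · intro h
    have hcomp : ∀ x, component π x = univ :=
      fun x => eq_univ_of_forall fun y => mem_component.2 (h x y)
    ext B
    simp only [mem_cPart, hcomp, mem_singleton]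
    exact ⟨fun ⟨_, hB⟩ => hB.symm, fun hB => ⟨⟨0, hn⟩, hB.symm⟩⟩

end Components

section Blocks

variable {n : ℕ}

def blockEmb (B : Finset (Fin n)) : Fin B.card ↪o Fin n :=
  B.orderEmbOfFin rfl

theorem map_blockEmb_univ (B : Finset (Fin n)) : univ.map (blockEmb B).toEmbedding = B :=
  map_orderEmbOfFin_univ B rfl

theorem blockEmb_mem (B : Finset (Fin n)) (j : Fin B.card) : blockEmb B j ∈ B :=
  orderEmbOfFin_mem B rfl j

theorem map_blockEmb_subset (B : Finset (Fin n)) (Q : Finset (Fin B.card)) :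
    Q.map (blockEmb B).toEmbedding ⊆ B := fun _ hx => by
  obtain ⟨j, -, rfl⟩ := mem_map.1 hx
  exact blockEmb_mem B j

theorem exists_map_blockEmb_eq {B P : Finset (Fin n)} (hP : P ⊆ B) :
    ∃ Q : Finset (Fin B.card), Q.map (blockEmb B).toEmbedding = P := by
  rw [← map_blockEmb_univ B, subset_map_iff] at hP
  obtain ⟨Q, -, rfl⟩ := hP
  exact ⟨Q, rfl⟩

theorem exists_blockEmb_eq {B : Finset (Fin n)} {x : Fin n} (hx : x ∈ B) :
    ∃ j, blockEmb B j = x := by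
  rw [← map_blockEmb_univ B] at hx
  obtain ⟨j, -, rfl⟩ := mem_map.1 hx
  exact ⟨j, rfl⟩

noncomputable def restrictBlock (B : Finset (Fin n)) (π : Finset (Finset (Fin n))) :
    Finset (Finset (Fin B.card)) :=
  univ.filter fun Q => Q.map (blockEmb B).toEmbedding ∈ π

theorem mem_restrictBlock {B : Finset (Fin n)} {π : Finset (Finset (Fin n))}
    {Q : Finset (Fin B.card)} : Q ∈ restrictBlock B π ↔ Q.map (blockEmb B).toEmbedding ∈ π := by
  simp [restrictBlock]

noncomputable def glue (γ : Finset (Finset (Fin n)))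
    (fam : ∀ B : {B // B ∈ γ}, Finset (Finset (Fin B.1.card))) : Finset (Finset (Fin n)) :=
  γ.attach.biUnion fun B => (fam B).image fun Q => Q.map (blockEmb B.1).toEmbedding

theorem mem_glue {γ : Finset (Finset (Fin n))}
    {fam : ∀ B : {B // B ∈ γ}, Finset (Finset (Fin B.1.card))} {P : Finset (Fin n)} :
    P ∈ glue γ fam ↔ ∃ B, ∃ Q ∈ fam B, Q.map (blockEmb B.1).toEmbedding = P := by
  simp [glue]

end Blocks

section Restriction

variable {n : ℕ} {π : Finset (Finset (Fin n))} {B : Finset (Fin n)}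

theorem isNCL_restrictBlock (hπ : IsNCL n π) (hB : B ∈ cPart n π) :
    IsNCL B.card (restrictBlock B π) := by
  refine ⟨fun Q hQ => ?_, fun j => ?_, fun Q hQ Q' hQ' hne => ?_, fun Q hQ Q' hQ' hne => ?_⟩
  · exact map_nonempty.1 (hπ.1 _ (mem_restrictBlock.1 hQ))
  · obtain ⟨P, hP, hjP⟩ := hπ.2.1 (blockEmb B j)
    obtain ⟨Q, rfl⟩ := exists_map_blockEmb_eq (subset_of_mem_cPart hB hP hjP (blockEmb_mem B j))
    exact ⟨Q, mem_restrictBlock.2 hP, (mem_map' _).1 hjP⟩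
  · rw [← crosses_map_iff (blockEmb B)]
    exact hπ.2.2.1 _ (mem_restrictBlock.1 hQ) _ (mem_restrictBlock.1 hQ')
      ((map_injective _).ne hne)
  · show LinkCompatible Q Q'
    rw [← linkCompatible_map_iff (blockEmb B)]
    exact hπ.2.2.2 _ (mem_restrictBlock.1 hQ) _ (mem_restrictBlock.1 hQ')
      ((map_injective _).ne hne)

theorem connected_restrictBlock (hB : B ∈ cPart n π) {j j' : Fin B.card}
    (h : Connected π (blockEmb B j) (blockEmb B j')) : Connected (restrictBlock B π) j j' := by
  suffices ∀ y, Connected π (blockEmb B j) y → ∀ j', blockEmb B j' = y →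
      Connected (restrictBlock B π) j j' from this _ h j' rfl
  intro y hy
  induction hy with
  | refl => exact fun j' hj' => (blockEmb B).injective hj' ▸ .refl
  | @tail b c hb hbc ih =>
    intro j' hj'
    have hbB : b ∈ B := component_eq_of_mem hB (blockEmb_mem B j) ▸ mem_component.2 hb
    obtain ⟨P, hP, hbP, hcP⟩ := hbc
    obtain ⟨Q, rfl⟩ := exists_map_blockEmb_eq (subset_of_mem_cPart hB hP hbP hbB)
    obtain ⟨i, hiQ, rfl⟩ := mem_map.1 hbP
    refine .tail (ih i rfl) ⟨Q, mem_restrictBlock.2 hP, hiQ, ?_⟩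
    exact (mem_map' _).1 (hj' ▸ hcP)

theorem cPart_restrictBlock (hB : B ∈ cPart n π) :
    cPart B.card (restrictBlock B π) = {univ} := by
  refine (cPart_eq_singleton_univ_iff (card_pos.2 (nonempty_of_mem_cPart hB))).2 fun j j' => ?_
  refine connected_restrictBlock hB (mem_component.1 ?_)
  rw [component_eq_of_mem hB (blockEmb_mem B j)]
  exact blockEmb_mem B j'

end Restriction

section Gluing

variable {n : ℕ} {γ : Finset (Finset (Fin n))}
  {fam : ∀ B : {B // B ∈ γ}, Finset (Finset (Fin B.1.card))}

theorem isNCL_glue (hγ : IsNC n γ) (hfam : ∀ B, IsNCL B.1.card (fam B)) :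
    IsNCL n (glue γ fam) := by
  refine ⟨fun P hP => ?_, fun x => ?_, fun P hP P' hP' hne => ?_, fun P hP P' hP' hne => ?_⟩
  · obtain ⟨B, Q, hQ, rfl⟩ := mem_glue.1 hP
    exact map_nonempty.2 ((hfam B).1 Q hQ)
  · obtain ⟨B, hB, hxB⟩ := hγ.1.2.1 x
    obtain ⟨j, rfl⟩ := exists_blockEmb_eq hxB
    obtain ⟨Q, hQ, hjQ⟩ := (hfam ⟨B, hB⟩).2.1 j
    exact ⟨_, mem_glue.2 ⟨⟨B, hB⟩, Q, hQ, rfl⟩, mem_map_of_mem _ hjQ⟩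
  all_goals
    obtain ⟨B, Q, hQ, rfl⟩ := mem_glue.1 hP
    obtain ⟨B', Q', hQ', rfl⟩ := mem_glue.1 hP'
  · by_cases hBB' : B = B'
    · subst hBB'
      rw [crosses_map_iff]
      exact (hfam B).2.2.1 Q hQ Q' hQ' (ne_of_apply_ne _ hne)
    · exact fun h => hγ.1.2.2.1 B B.2 B' B'.2 (Subtype.coe_injective.ne hBB')
        (h.mono (map_blockEmb_subset _ _) (map_blockEmb_subset _ _))
  · show LinkCompatible _ _
    by_cases hBB' : B = B'
    · subst hBB'
      rw [linkCompatible_map_iff]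
      exact (hfam B).2.2.2 Q hQ Q' hQ' (ne_of_apply_ne _ hne)
    · exact linkCompatible_of_disjoint ((hγ.2 B B.2 B' B'.2 (Subtype.coe_injective.ne hBB')).mono
        (map_blockEmb_subset _ _) (map_blockEmb_subset _ _))

theorem component_glue (hγ : IsNC n γ) (hfam : ∀ B, cPart B.1.card (fam B) = {univ})
    {B : Finset (Fin n)} (hB : B ∈ γ) {x : Fin n} (hx : x ∈ B) :
    component (glue γ fam) x = B := by
  refine Subset.antisymm (fun y hy => ?_) (fun y hy => ?_)
  · refine (mem_component.1 hy).mem_of_forall_subset (fun P hP z hzP hzB => ?_) hx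
    obtain ⟨B', Q, -, rfl⟩ := mem_glue.1 hP
    have hB'B : B'.1 = B := by
      by_contra hne
      exact disjoint_left.1 (hγ.2 _ B'.2 _ hB hne) (map_blockEmb_subset _ _ hzP) hzB
    exact hB'B ▸ map_blockEmb_subset _ _
  · obtain ⟨i, rfl⟩ := exists_blockEmb_eq hx
    obtain ⟨j, rfl⟩ := exists_blockEmb_eq hy
    have hij := (cPart_eq_singleton_univ_iff i.pos).1 (hfam ⟨B, hB⟩) i j
    refine mem_component.2 (Relation.ReflTransGen.lift (blockEmb B) ?_ _ _ hij)
    rintro a b ⟨Q, hQ, ha, hb⟩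
    exact ⟨_, mem_glue.2 ⟨⟨B, hB⟩, Q, hQ, rfl⟩, mem_map_of_mem _ ha, mem_map_of_mem _ hb⟩

theorem cPart_glue (hγ : IsNC n γ) (hfam : ∀ B, cPart B.1.card (fam B) = {univ}) :
    cPart n (glue γ fam) = γ := by
  ext B
  rw [mem_cPart]
  constructor
  · rintro ⟨x, rfl⟩
    obtain ⟨B, hB, hxB⟩ := hγ.1.2.1 x
    exact component_glue hγ hfam hB hxB ▸ hB
  · intro hB
    obtain ⟨x, hx⟩ := hγ.1.1 B hB
    exact ⟨x, component_glue hγ hfam hB hx⟩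

theorem restrictBlock_glue (hγ : IsNC n γ) (hfam : ∀ B, ∀ Q ∈ fam B, Q.Nonempty)
    (B : {B // B ∈ γ}) : restrictBlock B.1 (glue γ fam) = fam B := by
  ext Q
  rw [mem_restrictBlock, mem_glue]
  refine ⟨fun ⟨B', Q', hQ', hQQ'⟩ => ?_, fun hQ => ⟨B, Q, hQ, rfl⟩⟩
  obtain ⟨j, hj⟩ := hfam B' Q' hQ'
  have hB'B : B' = B := by
    refine Subtype.ext (by_contra fun hne => disjoint_left.1 (hγ.2 _ B'.2 _ B.2 hne)
      (map_blockEmb_subset _ Q' (mem_map_of_mem _ hj)) (map_blockEmb_subset _ Q ?_))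
    exact hQQ' ▸ mem_map_of_mem _ hj
  subst hB'B
  exact map_injective _ hQQ' ▸ hQ'

theorem glue_restrictBlock {π : Finset (Finset (Fin n))} (hπ : IsNCL n π)
    (hc : cPart n π = γ) : glue γ (fun B => restrictBlock B.1 π) = π := by
  subst hc
  ext P
  rw [mem_glue]
  constructor
  · rintro ⟨B, Q, hQ, rfl⟩
    exact mem_restrictBlock.1 hQ
  · intro hP
    obtain ⟨B, hB, hPB⟩ := exists_mem_cPart_superset hP (hπ.1 P hP)
    obtain ⟨Q, rfl⟩ := exists_map_blockEmb_eq hPB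
    exact ⟨⟨B, hB⟩, Q, mem_restrictBlock.2 hP, rfl⟩

end Gluing

theorem refines_iff {n : ℕ} {σ π : Finset (Finset (Fin n))} :
    Refines n σ π ↔ ∀ B ∈ π, ∀ x ∈ B, ∃ C ∈ σ, x ∈ C ∧ C ⊆ B := by
  constructor
  · intro h B hB x hx
    obtain ⟨S, hS, rfl⟩ := h B hB
    obtain ⟨C, hC, hxC⟩ := mem_sup.1 hx
    exact ⟨C, hS hC, hxC, le_sup (f := id) hC⟩
  · intro h B hB
    refine ⟨σ.filter (· ⊆ B), filter_subset _ _,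
      le_antisymm (fun x hx => ?_) (Finset.sup_le fun C hC => (mem_filter.1 hC).2)⟩
    obtain ⟨C, hC, hxC, hCB⟩ := h B hB x hx
    exact mem_sup.2 ⟨C, mem_filter.2 ⟨hC, hCB⟩, hxC⟩

theorem refines_iff_forall_restrictBlock {n : ℕ} {σ π γ : Finset (Finset (Fin n))}
    (hπ : IsNCL n π) (hc : cPart n π = γ) :
    Refines n σ π ↔
      ∀ B : {B // B ∈ γ}, Refines B.1.card (restrictBlock B.1 σ) (restrictBlock B.1 π) := by
  subst hc
  simp only [refines_iff]
  constructor
  · intro h B Q hQ j hj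
    obtain ⟨C, hC, hjC, hCQ⟩ := h _ (mem_restrictBlock.1 hQ) _ (mem_map_of_mem _ hj)
    obtain ⟨R, rfl⟩ := exists_map_blockEmb_eq (hCQ.trans (map_blockEmb_subset B.1 Q))
    exact ⟨R, mem_restrictBlock.2 hC, (mem_map' _).1 hjC, map_subset_map.1 hCQ⟩
  · intro h P hP x hx
    obtain ⟨B, hB, hPB⟩ := exists_mem_cPart_superset hP (hπ.1 P hP)
    obtain ⟨Q, rfl⟩ := exists_map_blockEmb_eq hPB
    obtain ⟨j, hj, rfl⟩ := mem_map.1 hx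
    obtain ⟨R, hR, hjR, hRQ⟩ := h ⟨B, hB⟩ Q (mem_restrictBlock.2 hP) j hj
    exact ⟨_, mem_restrictBlock.1 hR, mem_map_of_mem _ hjR, map_subset_map.2 hRQ⟩

/-- If `γ ∈ NC(n)` has blocks `B_1, …, B_s`, the fiber `[γ] = {π ∈ NCL(n) : c(π) = γ}`
is order-isomorphic to the product `[1_{k_1}] × ⋯ × [1_{k_s}]` of the sets of connected
non-crossing linked partitions on the block sizes `k_l = |B_l|`. -/
theorem fiber_factorization (n : ℕ) (γ : Finset (Finset (Fin n))) (hγ : IsNC n γ) :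
    ∃ e : {π : Finset (Finset (Fin n)) // IsNCL n π ∧ cPart n π = γ} ≃
        (∀ B : {B : Finset (Fin n) // B ∈ γ},
          {π : Finset (Finset (Fin B.1.card)) //
            IsNCL B.1.card π ∧ cPart B.1.card π = {(Finset.univ : Finset (Fin B.1.card))}}),
      ∀ a b, Refines n a.1 b.1 ↔ ∀ B, Refines B.1.card (e a B).1 (e b B).1 := by
  refine ⟨{ toFun := fun π B => ⟨restrictBlock B.1 π.1, ?_⟩
            invFun := fun fam => ⟨glue γ fun B => (fam B).1,
              isNCL_glue hγ fun B => (fam B).2.1, cPart_glue hγ fun B => (fam B).2.2⟩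
            left_inv := fun π => Subtype.ext (glue_restrictBlock π.2.1 π.2.2)
            right_inv := fun fam => funext fun B => Subtype.ext
              (restrictBlock_glue hγ (fun B => (fam B).2.1.1) B) },
    fun a b => refines_iff_forall_restrictBlock b.2.1 b.2.2⟩
  have hB : B.1 ∈ cPart n π.1 := by rw [π.2.2]; exact B.2
  exact ⟨isNCL_restrictBlock π.2.1 hB, cPart_restrictBlock hB⟩
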